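/- arXiv:1703.02937 — 2 statements merged into one kernel-verified Lean document; each statement's English description precedes it below -/
import Mathlib

section
/- Let A = (a_ij) be an N×N real matrix with nonnegative entries and zero diagonal such that the directed graph G[A] is strongly connected. Let b_1,…,b_N ≥ 0 with b_k > 0 for at least one k, and let α_1,…,α_N ≥ 0 satisfy 2α_i b_i < 1 and d_i^+[A] · α_i/(1 − 2α_i b_i) < 1/2 for every i, where d_i^+[A] = Σ_j a_ij. Let z_1,…,z_N, v_1,…,v_N : [0,∞) → ℝ^m be continuous functions satisfying the coupling relation v_i(t) + b_i z_i(t) = Σ_{j=1}^N a_ij (z_j(t) − z_i(t)) for all t and i, and suppose there exist constants 𝒲_i ≥ 0 such that ∫_0^T (⟨z_i(t), v_i(t)⟩ + α_i |v_i(t)|²) dt ≥ −𝒲_i for all T ≥ 0 and all i. Then ∫_0^∞ |z_i(t)|² dt < ∞ and ∫_0^∞ |v_i(t)|² dt < ∞ for every i. -/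
open RealInnerProductSpace MeasureTheory

/-!
Strong connectivity gives the Laplacian `diag (∑ⱼ a_ij) - A` a positive left null vector `ξ`.
Substituting the coupling `v_i = ∑ⱼ a_ij (z_j - z_i) - b_i z_i` into the supply rate
`⟪z_i, v_i⟫ + α_i ‖v_i‖²`, expanding the inner product by polarization and bounding
`‖∑ⱼ a_ij (z_j - z_i)‖²` by Cauchy–Schwarz, the supply rate is at most
`β_i / 2 · ∑ⱼ a_ij (‖z_j‖² - ‖z_i‖²)` minus a dissipation rate
`ε_i ∑ⱼ a_ij ‖z_j - z_i‖² + γ_i ‖z_i‖²`, where `β_i = 1 - 2 α_i b_i`; the degree condition is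
exactly `ε_i > 0`, and `γ_i > 0` wherever `b_i > 0`. With the weights `ξ_i / β_i` the indefinite
terms cancel, so the passivity bounds control the integral of every dissipation rate. This puts
`z_k` in `L²` at a node with `b_k > 0` and `z_j - z_i` in `L²` along every arc; strong connectivity
spreads `z_i ∈ L²` to all nodes, and the coupling then gives `v_i ∈ L²`.
-/

theorem forall_of_stronglyConnected {ι : Type*} {R : ι → ι → Prop}
    (hR : ∀ i j, i ≠ j → Relation.TransGen R i j) {P : ι → Prop} {k : ι} (hk : P k)
    (hstep : ∀ i j, R i j → P j → P i) (i : ι) : P i := by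
  rcases eq_or_ne i k with rfl | hik
  · exact hk
  · exact (hR i k hik).head_induction_on (fun h => hstep _ _ h hk) fun h _ => hstep _ _ h

section Balancing

variable {ι : Type*} [Fintype ι]

/-- `ξ` is a left null vector of the Laplacian `diag (∑ⱼ A i j) - A`. -/
def IsBalancing (A : ι → ι → ℝ) (ξ : ι → ℝ) : Prop :=
  ∀ j, ξ j * ∑ l, A j l = ∑ i, ξ i * A i j

theorem sum_mul_sum_eq_sum_sum_mul (A : ι → ι → ℝ) (ξ : ι → ℝ) :
    ∑ j, ξ j * ∑ l, A j l = ∑ j, ∑ i, ξ i * A i j := by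
  simp_rw [Finset.mul_sum]
  exact Finset.sum_comm

open Matrix in
theorem exists_ne_zero_isBalancing [Nonempty ι] (A : ι → ι → ℝ) :
    ∃ ζ : ι → ℝ, ζ ≠ 0 ∧ IsBalancing A ζ := by
  classical
  set L : Matrix ι ι ℝ := diagonal (fun i => ∑ l, A i l) - of A
  have hL : L.det = 0 := by
    refine exists_mulVec_eq_zero_iff.1 ⟨1, one_ne_zero, funext fun i => ?_⟩
    rw [sub_mulVec, Pi.sub_apply, mulVec_diagonal]
    simp [mulVec, dotProduct]
  obtain ⟨ζ, hζ, hζL⟩ := exists_vecMul_eq_zero_iff.2 hL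
  refine ⟨ζ, hζ, fun j => ?_⟩
  have hj := congrFun hζL j
  rw [vecMul_sub, Pi.sub_apply, vecMul_diagonal, Pi.zero_apply, sub_eq_zero] at hj
  simpa [vecMul, dotProduct] using hj

theorem IsBalancing.abs {A : ι → ι → ℝ} (hA : ∀ i j, 0 ≤ A i j) {ζ : ι → ℝ}
    (hζ : IsBalancing A ζ) : IsBalancing A (fun i => |ζ i|) := by
  have hle : ∀ j, |ζ j| * ∑ l, A j l ≤ ∑ i, |ζ i| * A i j := fun j =>
    calc |ζ j| * ∑ l, A j l = |∑ i, ζ i * A i j| := by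
          rw [← hζ j, abs_mul, abs_of_nonneg (Finset.sum_nonneg fun l _ => hA j l)]
      _ ≤ ∑ i, |ζ i * A i j| := Finset.abs_sum_le_sum_abs _ _
      _ = ∑ i, |ζ i| * A i j := by simp_rw [abs_mul, abs_of_nonneg (hA _ _)]
  exact fun j => (Finset.sum_eq_sum_iff_of_le fun j _ => hle j).1
    (sum_mul_sum_eq_sum_sum_mul A _) j (Finset.mem_univ j)

theorem IsBalancing.pos {A : ι → ι → ℝ} (hA : ∀ i j, 0 ≤ A i j)
    (hconn : ∀ i j : ι, i ≠ j → Relation.TransGen (fun a b => 0 < A a b) i j)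
    {ξ : ι → ℝ} (hξ : IsBalancing A ξ) (hξ0 : ∀ i, 0 ≤ ξ i) (hne : ξ ≠ 0) (i : ι) :
    0 < ξ i := by
  by_contra! hi
  refine hne (funext (forall_of_stronglyConnected (P := fun i => ξ i = 0) hconn
    (le_antisymm hi (hξ0 i)) fun p q hpq hq => ?_))
  have hin : ∑ l, ξ l * A l q = 0 := by rw [← hξ q, hq, zero_mul]
  have := (Finset.sum_eq_zero_iff_of_nonneg fun l _ => mul_nonneg (hξ0 l) (hA l q)).1 hin p
    (Finset.mem_univ p)
  exact (mul_eq_zero.1 this).resolve_right hpq.ne'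

theorem exists_pos_isBalancing [Nonempty ι] {A : ι → ι → ℝ} (hA : ∀ i j, 0 ≤ A i j)
    (hconn : ∀ i j : ι, i ≠ j → Relation.TransGen (fun a b => 0 < A a b) i j) :
    ∃ ξ : ι → ℝ, (∀ i, 0 < ξ i) ∧ IsBalancing A ξ := by
  obtain ⟨ζ, hζ0, hζ⟩ := exists_ne_zero_isBalancing A
  refine ⟨_, (hζ.abs hA).pos hA hconn (fun i => abs_nonneg _) ?_, hζ.abs hA⟩
  exact fun h => hζ0 (funext fun i => abs_eq_zero.1 (congrFun h i))

theorem IsBalancing.sum_mul_sum_mul_sub_eq_zero {A : ι → ι → ℝ} {ξ : ι → ℝ}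
    (hξ : IsBalancing A ξ) (f : ι → ℝ) : ∑ i, ξ i * ∑ j, A i j * (f j - f i) = 0 := by
  have hin : ∑ i, ξ i * ∑ j, A i j * f j = ∑ j, (∑ i, ξ i * A i j) * f j := by
    simp_rw [Finset.mul_sum, Finset.sum_mul, mul_assoc]
    exact Finset.sum_comm
  have hout : ∑ i, ξ i * ∑ j, A i j * f i = ∑ j, (ξ j * ∑ l, A j l) * f j := by
    simp_rw [← Finset.sum_mul, ← mul_assoc]
  simp only [mul_sub, Finset.sum_sub_distrib]
  rw [hin, hout, sub_eq_zero]
  exact Finset.sum_congr rfl fun j _ => by rw [hξ j]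

end Balancing

section Dissipation

variable {ι E : Type*} [Fintype ι] [NormedAddCommGroup E] {i : ι}

theorem norm_sum_smul_sq_le [NormedSpace ℝ E] (a : ι → ℝ) (ha : ∀ i, 0 ≤ a i)
    (u : ι → E) :
    ‖∑ i, a i • u i‖ ^ 2 ≤ (∑ i, a i) * ∑ i, a i * ‖u i‖ ^ 2 :=
  calc ‖∑ i, a i • u i‖ ^ 2 ≤ (∑ i, a i * ‖u i‖) ^ 2 := by
        gcongr
        refine (norm_sum_le _ _).trans_eq ?_
        simp_rw [norm_smul, Real.norm_of_nonneg (ha _)]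
    _ ≤ _ := Finset.sum_sq_le_sum_mul_sum_of_sq_le_mul _ (fun i _ => ha i)
        (fun i _ => mul_nonneg (ha i) (sq_nonneg _)) fun i _ => le_of_eq (by ring)

theorem inner_sum_smul_sub [InnerProductSpace ℝ E] (a : ι → ℝ) (x : ι → E) (y : E) :
    ⟪y, ∑ j, a j • (x j - y)⟫ =
      (∑ j, a j * (‖x j‖ ^ 2 - ‖y‖ ^ 2) - ∑ j, a j * ‖x j - y‖ ^ 2) / 2 := by
  rw [inner_sum, ← Finset.sum_sub_distrib, Finset.sum_div]
  refine Finset.sum_congr rfl fun j _ => ?_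
  rw [real_inner_smul_right, norm_sub_sq_real, inner_sub_right, real_inner_self_eq_norm_sq,
    real_inner_comm]
  ring

def dissipationRate (A : ι → ι → ℝ) (ε γ : ι → ℝ) (z : ι → E) (i : ι) : ℝ :=
  ε i * ∑ j, A i j * ‖z j - z i‖ ^ 2 + γ i * ‖z i‖ ^ 2

variable {A : ι → ι → ℝ} {ε γ : ι → ℝ}

theorem mul_norm_sub_sq_le_dissipationRate (hA : ∀ j, 0 ≤ A i j) (hε : 0 ≤ ε i)
    (hγ : 0 ≤ γ i) (z : ι → E) (j : ι) :
    ε i * A i j * ‖z j - z i‖ ^ 2 ≤ dissipationRate A ε γ z i := by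
  have hj : A i j * ‖z j - z i‖ ^ 2 ≤ ∑ l, A i l * ‖z l - z i‖ ^ 2 :=
    Finset.single_le_sum (f := fun l => A i l * ‖z l - z i‖ ^ 2)
      (fun l _ => mul_nonneg (hA l) (sq_nonneg _)) (Finset.mem_univ j)
  unfold dissipationRate
  nlinarith [mul_le_mul_of_nonneg_left hj hε, mul_nonneg hγ (sq_nonneg ‖z i‖)]

theorem mul_norm_sq_le_dissipationRate (hA : ∀ j, 0 ≤ A i j) (hε : 0 ≤ ε i) (z : ι → E) :
    γ i * ‖z i‖ ^ 2 ≤ dissipationRate A ε γ z i :=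
  le_add_of_nonneg_left <|
    mul_nonneg hε (Finset.sum_nonneg fun j _ => mul_nonneg (hA j) (sq_nonneg _))

theorem dissipationRate_nonneg (hA : ∀ j, 0 ≤ A i j) (hε : 0 ≤ ε i) (hγ : 0 ≤ γ i)
    (z : ι → E) : 0 ≤ dissipationRate A ε γ z i :=
  (mul_nonneg hγ (sq_nonneg _)).trans (mul_norm_sq_le_dissipationRate hA hε z)

theorem continuous_dissipationRate {z : ι → ℝ → E} (hz : ∀ i, Continuous (z i)) (i : ι) :
    Continuous fun t => dissipationRate A ε γ (fun j => z j t) i := by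
  unfold dissipationRate
  fun_prop

theorem supply_add_dissipationRate_le [InnerProductSpace ℝ E] {b α : ι → ℝ}
    (hA : ∀ j, 0 ≤ A i j) (hα : 0 ≤ α i) {z v : ι → E}
    (hcoup : v i + b i • z i = ∑ j, A i j • (z j - z i)) :
    ⟪z i, v i⟫ + α i * ‖v i‖ ^ 2 +
        dissipationRate A (fun i => (1 - 2 * α i * b i) / 2 - (∑ j, A i j) * α i)
          (fun i => b i * (1 - α i * b i)) z i ≤
      (1 - 2 * α i * b i) / 2 * ∑ j, A i j * (‖z j‖ ^ 2 - ‖z i‖ ^ 2) := by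
  have hcs := norm_sum_smul_sq_le (A i) hA (fun j => z j - z i)
  rw [eq_sub_of_add_eq hcoup, inner_sub_right, norm_sub_sq_real, real_inner_smul_right,
    real_inner_smul_right, real_inner_self_eq_norm_sq, real_inner_comm (z i),
    inner_sum_smul_sub, norm_smul, Real.norm_eq_abs, mul_pow, sq_abs]
  unfold dissipationRate
  linear_combination α i * hcs

theorem sum_mul_supply_add_dissipationRate_nonpos [InnerProductSpace ℝ E] {b α ξ : ι → ℝ}
    (hA : ∀ i j, 0 ≤ A i j) (hξ0 : ∀ i, 0 ≤ ξ i) (hξ : IsBalancing A ξ) (hα : ∀ i, 0 ≤ α i)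
    (hβ : ∀ i, 0 < 1 - 2 * α i * b i) {z v : ι → E}
    (hcoup : ∀ i, v i + b i • z i = ∑ j, A i j • (z j - z i)) :
    ∑ i, ξ i / (1 - 2 * α i * b i) * (⟪z i, v i⟫ + α i * ‖v i‖ ^ 2 +
        dissipationRate A (fun i => (1 - 2 * α i * b i) / 2 - (∑ j, A i j) * α i)
          (fun i => b i * (1 - α i * b i)) z i) ≤ 0 :=
  calc _ ≤ ∑ i, ξ i / (1 - 2 * α i * b i) *
        ((1 - 2 * α i * b i) / 2 * ∑ j, A i j * (‖z j‖ ^ 2 - ‖z i‖ ^ 2)) :=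
        Finset.sum_le_sum fun i _ => mul_le_mul_of_nonneg_left
          (supply_add_dissipationRate_le (hA i) (hα i) (hcoup i))
          (div_nonneg (hξ0 i) (hβ i).le)
    _ = (∑ i, ξ i * ∑ j, A i j * (‖z j‖ ^ 2 - ‖z i‖ ^ 2)) / 2 := by
        rw [Finset.sum_div]
        refine Finset.sum_congr rfl fun i _ => ?_
        field_simp [(hβ i).ne']
    _ = 0 := by rw [hξ.sum_mul_sum_mul_sub_eq_zero, zero_div]

end Dissipation

theorem integrableOn_Ici_of_intervalIntegral_le {f : ℝ → ℝ} {a C : ℝ} (hf : Continuous f)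
    (hf0 : ∀ t, 0 ≤ f t) (h : ∀ T, a ≤ T → ∫ t in a..T, f t ≤ C) :
    IntegrableOn f (Set.Ici a) := by
  rw [integrableOn_Ici_iff_integrableOn_Ioi]
  refine integrableOn_Ioi_of_intervalIntegral_norm_bounded C a (fun T => hf.integrableOn_Ioc)
    Filter.tendsto_id ?_
  filter_upwards [Filter.eventually_ge_atTop a] with T hT
  simpa only [id, Real.norm_of_nonneg (hf0 _)] using h T hT

theorem integrableOn_Ici_of_sum_mul_add_nonpos {ι : Type*} [Fintype ι] {f g : ι → ℝ → ℝ}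
    {w W : ι → ℝ} {a : ℝ} (hf : ∀ i, Continuous (f i)) (hf0 : ∀ i t, 0 ≤ f i t)
    (hg : ∀ i, Continuous (g i)) (hw : ∀ i, 0 < w i)
    (hgW : ∀ i T, a ≤ T → -W i ≤ ∫ t in a..T, g i t)
    (hfg : ∀ t, ∑ i, w i * (g i t + f i t) ≤ 0) (i : ι) :
    IntegrableOn (f i) (Set.Ici a) := by
  refine integrableOn_Ici_of_intervalIntegral_le (hf i) (hf0 i)
    (C := (∑ j, w j * W j) / w i) fun T hT => ?_
  have hpt : ∀ t, w i * f i t ≤ -∑ j, w j * g j t := fun t => by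
    have hi := Finset.single_le_sum (fun j _ => mul_nonneg (hw j).le (hf0 j t))
      (Finset.mem_univ i)
    have := hfg t
    simp only [mul_add, Finset.sum_add_distrib] at this
    linarith
  rw [le_div_iff₀' (hw i), ← intervalIntegral.integral_const_mul]
  calc ∫ t in a..T, w i * f i t ≤ ∫ t in a..T, -∑ j, w j * g j t :=
        intervalIntegral.integral_mono_on hT (((hf i).const_mul _).intervalIntegrable _ _)
          ((continuous_finsetSum _ fun j _ => (hg j).const_mul _).neg.intervalIntegrable _ _)
          fun t _ => hpt t
    _ = ∑ j, w j * -∫ t in a..T, g j t := by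
        rw [intervalIntegral.integral_neg, intervalIntegral.integral_finsetSum
          fun j _ => ((hg j).const_mul _).intervalIntegrable _ _]
        simp only [intervalIntegral.integral_const_mul, Finset.sum_neg_distrib, mul_neg]
    _ ≤ ∑ j, w j * W j := Finset.sum_le_sum fun j _ =>
        mul_le_mul_of_nonneg_left (neg_le.1 (hgW j T hT)) (hw j).le

theorem memLp_two_of_mul_sq_norm_le {X E : Type*} [MeasurableSpace X] {μ : Measure X}
    [NormedAddCommGroup E] {u : X → E} {F : X → ℝ} {c : ℝ} (hu : AEStronglyMeasurable u μ)
    (hF : Integrable F μ) (hc : 0 < c) (h : ∀ t, c * ‖u t‖ ^ 2 ≤ F t) : MemLp u 2 μ := by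
  refine (memLp_two_iff_integrable_sq_norm hu).2
    ((hF.div_const c).mono' (hu.norm.pow 2) (ae_of_all _ fun t => ?_))
  rw [Real.norm_of_nonneg (sq_nonneg _), le_div_iff₀' hc]
  exact h t

section Network

variable {ι E : Type*} [Fintype ι] [NormedAddCommGroup E] {A : ι → ι → ℝ}

theorem integrableOn_dissipationRate [InnerProductSpace ℝ E] [Nonempty ι] {b α W : ι → ℝ}
    (hA : ∀ i j, 0 ≤ A i j)
    (hconn : ∀ i j : ι, i ≠ j → Relation.TransGen (fun a b => 0 < A a b) i j)
    (hα : ∀ i, 0 ≤ α i) (hβ : ∀ i, 0 < 1 - 2 * α i * b i)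
    (hε : ∀ i, 0 ≤ (1 - 2 * α i * b i) / 2 - (∑ j, A i j) * α i)
    (hγ : ∀ i, 0 ≤ b i * (1 - α i * b i)) {z v : ι → ℝ → E}
    (hz : ∀ i, Continuous (z i)) (hv : ∀ i, Continuous (v i))
    (hcoup : ∀ i t, v i t + b i • z i t = ∑ j, A i j • (z j t - z i t))
    (hW : ∀ i T, 0 ≤ T →
      -W i ≤ ∫ t in (0 : ℝ)..T, (⟪z i t, v i t⟫ + α i * ‖v i t‖ ^ 2)) (i : ι) :
    IntegrableOn (fun t => dissipationRate A
      (fun i => (1 - 2 * α i * b i) / 2 - (∑ j, A i j) * α i)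
      (fun i => b i * (1 - α i * b i)) (fun j => z j t) i) (Set.Ici 0) := by
  obtain ⟨ξ, hξ_pos, hξ⟩ := exists_pos_isBalancing hA hconn
  exact integrableOn_Ici_of_sum_mul_add_nonpos
    (g := fun i t => ⟪z i t, v i t⟫ + α i * ‖v i t‖ ^ 2) (continuous_dissipationRate hz)
    (fun i t => dissipationRate_nonneg (hA i) (hε i) (hγ i) _) (fun i => by fun_prop)
    (fun i => div_pos (hξ_pos i) (hβ i)) hW
    (fun t => sum_mul_supply_add_dissipationRate_nonpos hA (fun i => (hξ_pos i).le) hξ hα hβ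
      (hcoup · t)) i

theorem memLp_two_of_integrable_dissipationRate {X : Type*} [MeasurableSpace X]
    {μ : Measure X} {ε γ : ι → ℝ} (hA : ∀ i j, 0 ≤ A i j)
    (hconn : ∀ i j : ι, i ≠ j → Relation.TransGen (fun a b => 0 < A a b) i j)
    (hε : ∀ i, 0 < ε i) (hγ : ∀ i, 0 ≤ γ i) {k : ι} (hk : 0 < γ k) {z : ι → X → E}
    (hz : ∀ i, AEStronglyMeasurable (z i) μ)
    (hD : ∀ i, Integrable (fun t => dissipationRate A ε γ (fun j => z j t) i) μ) (i : ι) :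
    MemLp (z i) 2 μ := by
  refine forall_of_stronglyConnected (P := fun i => MemLp (z i) 2 μ) hconn
    (memLp_two_of_mul_sq_norm_le (hz k) (hD k) hk fun t =>
      mul_norm_sq_le_dissipationRate (hA k) (hε k).le fun j => z j t)
    (fun p q hpq hq => ?_) i
  have hedge := memLp_two_of_mul_sq_norm_le ((hz q).sub (hz p)) (hD p) (mul_pos (hε p) hpq)
    fun t => mul_norm_sub_sq_le_dissipationRate (hA p) (hε p).le (hγ p) (fun j => z j t) q
  simpa using hq.sub hedge

theorem memLp_of_coupling [NormedSpace ℝ E] {X : Type*} [MeasurableSpace X] {μ : Measure X}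
    {p : ENNReal} {b : ι → ℝ} {z v : ι → X → E} (hz : ∀ j, MemLp (z j) p μ) {i : ι}
    (hcoup : ∀ t, v i t + b i • z i t = ∑ j, A i j • (z j t - z i t)) : MemLp (v i) p μ := by
  have hv : v i = ∑ j, A i j • (z j - z i) - b i • z i := funext fun t => by
    simpa only [Pi.sub_apply, Finset.sum_apply, Pi.smul_apply] using eq_sub_of_add_eq (hcoup t)
  rw [hv]
  exact (memLp_finsetSum' _ fun j _ => ((hz j).sub (hz i)).const_smul _).sub
    ((hz i).const_smul _)

end Network

theorem leader_following_L2_deviations_general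
    (N m : ℕ) (A : Fin N → Fin N → ℝ)
    (hA_nonneg : ∀ i j, 0 ≤ A i j)
    (hconn : ∀ i j : Fin N, i ≠ j → Relation.TransGen (fun a b => 0 < A a b) i j)
    (b : Fin N → ℝ)
    (hb_nonneg : ∀ i, 0 ≤ b i)
    (hb_pos : ∃ k, 0 < b k)
    (α : Fin N → ℝ)
    (hα_nonneg : ∀ i, 0 ≤ α i)
    (hαb : ∀ i, 2 * α i * b i < 1)
    (hα_deg : ∀ i, (∑ j, A i j) * (α i / (1 - 2 * α i * b i)) < 1 / 2)
    (z v : Fin N → ℝ → EuclideanSpace ℝ (Fin m))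
    (hz_cont : ∀ i, Continuous (z i))
    (hv_cont : ∀ i, Continuous (v i))
    (hcoupling : ∀ i t, v i t + b i • z i t = ∑ j, A i j • (z j t - z i t))
    (𝒲 : Fin N → ℝ)
    (hdiss : ∀ i, ∀ T, 0 ≤ T →
      -𝒲 i ≤ ∫ t in (0 : ℝ)..T, (⟪z i t, v i t⟫ + α i * ‖v i t‖ ^ 2)) :
    (∀ i, IntegrableOn (fun t => ‖z i t‖ ^ 2) (Set.Ici (0 : ℝ))) ∧
    (∀ i, IntegrableOn (fun t => ‖v i t‖ ^ 2) (Set.Ici (0 : ℝ))) := by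
  obtain ⟨k, hk⟩ := hb_pos
  have : Nonempty (Fin N) := ⟨k⟩
  have hβ : ∀ i, 0 < 1 - 2 * α i * b i := fun i => sub_pos.2 (hαb i)
  have hε : ∀ i, 0 < (1 - 2 * α i * b i) / 2 - (∑ j, A i j) * α i := fun i => by
    have := hα_deg i
    rw [mul_div_assoc', div_lt_iff₀ (hβ i)] at this
    linarith
  have hαb_lt_one : ∀ i, 0 < 1 - α i * b i := fun i => by
    nlinarith [hαb i, mul_nonneg (hα_nonneg i) (hb_nonneg i)]
  have hγ : ∀ i, 0 ≤ b i * (1 - α i * b i) := fun i => mul_nonneg (hb_nonneg i) (hαb_lt_one i).le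
  have hD := integrableOn_dissipationRate hA_nonneg hconn hα_nonneg hβ (fun i => (hε i).le) hγ
    hz_cont hv_cont hcoupling hdiss
  have hz := memLp_two_of_integrable_dissipationRate hA_nonneg hconn hε hγ (mul_pos hk (hαb_lt_one k))
    (fun i => (hz_cont i).aestronglyMeasurable) hD
  have hv := fun i => memLp_of_coupling hz (hcoupling i)
  exact ⟨fun i => (memLp_two_iff_integrable_sq_norm (hz_cont i).aestronglyMeasurable).1 (hz i),
    fun i => (memLp_two_iff_integrable_sq_norm (hv_cont i).aestronglyMeasurable).1 (hv i)⟩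

/-- Theorem 1⁺, statement (1) (leader-following, deviation form): with `G[A]`
strongly connected, `b_i ≥ 0` not all zero, `2α_i b_i < 1` and
`d_i⁺[A]·α_i/(1-2α_i b_i) < 1/2`, if the deviations satisfy the coupling
`v_i + b_i z_i = ∑ j a_ij (z_j - z_i)` and the integrated incremental passivity
condition, then `z_i, v_i ∈ L²[0,∞)` for every `i`. -/
theorem leader_following_L2_deviations
    (N m : ℕ) (A : Fin N → Fin N → ℝ)
    (hA_nonneg : ∀ i j, 0 ≤ A i j)
    (hA_diag : ∀ i, A i i = 0)
    (hconn : ∀ i j : Fin N, i ≠ j → Relation.TransGen (fun a b => 0 < A a b) i j)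
    (b : Fin N → ℝ)
    (hb_nonneg : ∀ i, 0 ≤ b i)
    (hb_pos : ∃ k, 0 < b k)
    (α : Fin N → ℝ)
    (hα_nonneg : ∀ i, 0 ≤ α i)
    (hαb : ∀ i, 2 * α i * b i < 1)
    (hα_deg : ∀ i, (∑ j, A i j) * (α i / (1 - 2 * α i * b i)) < 1 / 2)
    (z v : Fin N → ℝ → EuclideanSpace ℝ (Fin m))
    (hz_cont : ∀ i, Continuous (z i))
    (hv_cont : ∀ i, Continuous (v i))
    (hcoupling : ∀ i t, v i t + b i • z i t = ∑ j, A i j • (z j t - z i t))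
    (𝒲 : Fin N → ℝ)
    (h𝒲_nonneg : ∀ i, 0 ≤ 𝒲 i)
    (hdiss : ∀ i, ∀ T, 0 ≤ T →
      -𝒲 i ≤ ∫ t in (0 : ℝ)..T, (⟪z i t, v i t⟫ + α i * ‖v i t‖ ^ 2)) :
    (∀ i, IntegrableOn (fun t => ‖z i t‖ ^ 2) (Set.Ici (0 : ℝ))) ∧
    (∀ i, IntegrableOn (fun t => ‖v i t‖ ^ 2) (Set.Ici (0 : ℝ))) :=
  leader_following_L2_deviations_general N m A hA_nonneg hconn b hb_nonneg hb_pos α hα_nonneg hαb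
    hα_deg z v hz_cont hv_cont hcoupling 𝒲 hdiss
end

section
/- Let A = (a_ij) be an N×N real matrix with nonnegative entries and zero diagonal such that the directed graph G[A] is strongly connected. Let b_1,…,b_N ≥ 0 with b_k > 0 for at least one k, and let α_1,…,α_N ≥ 0 satisfy 2α_i b_i < 1 and d_i^+[A] · α_i/(1 − 2α_i b_i) < 1/2 for every i. For each i, let f_i : ℝ^{n_i} × ℝ^m → ℝ^{n_i} be continuously differentiable with globally bounded partial derivatives, let h_i : ℝ^{n_i} → ℝ^m be linear, and let V_i : ℝ^{n_i} → [0,∞) be continuous and radially unbounded. Let x_i, x̄_i : [0,∞) → ℝ^{n_i} be continuously differentiable with x_i'(t) = f_i(x_i(t), u_i(t)), x̄_i'(t) = f_i(x̄_i(t), ū_i(t)), outputs y_i = h_i(x_i), and suppose the reference outputs coincide: h_i(x̄_i(t)) = ȳ(t) for all i and t. Assume the coupling relation (u_i(t) − ū_i(t)) + b_i (y_i(t) − ȳ(t)) = Σ_{j=1}^N a_ij ((y_j(t) − ȳ(t)) − (y_i(t) − ȳ(t))) holds, and that the incremental dissipation inequality V_i(x_i(T) − x̄_i(T)) − V_i(x_i(0)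 − x̄_i(0)) ≤ ∫_0^T (⟨y_i − ȳ, u_i − ū_i⟩ + α_i |u_i − ū_i|²) dt holds for all T ≥ 0 and all i. Then the deviations x_i(t) − x̄_i(t) are bounded on [0,∞) and every output converges to the reference output: |y_i(t) − ȳ(t)| → 0 as t → ∞ for all i. -/
open RealInnerProductSpace MeasureTheory Set Filter Topology NNReal

/-!
Write `e_i = y_i - ȳ`, `γ_i = 1 - 2 α_i b_i` and `Q_i(T) = ∫₀ᵀ |e_i|²`. Substituting the coupling
into the supply rate `⟨e_i, u_i - ū_i⟩ + α_i |u_i - ū_i|²`, the degree condition bounds it by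
`-(γ_i / 2) (L |e|²)_i - b_i (1 - α_i b_i) |e_i|²`, where `L` is the weighted Laplacian of `A`.
Integrating and using `V_i ≥ 0` gives `(L Q)_i + B_i Q_i ≤ K_i` with
`B_i = 2 b_i (1 - α_i b_i) / γ_i` and `K_i = 2 V_i(0) / γ_i`. A maximum principle along paths into
a node `k` with `b_k > 0` bounds `Q(T)` uniformly in `T`; this bounds the storage `V_i`, hence the
state deviations, the inputs and the derivatives of the `e_i`. A Lipschitz signal with bounded
`∫ |e_i|²` tends to zero (Barbalat).
-/

section GraphLaplacian

variable {ι : Type*} [Fintype ι]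

def graphLaplacian (A : ι → ι → ℝ) (Q : ι → ℝ) (i : ι) : ℝ := ∑ j, A i j * (Q i - Q j)

theorem sum_mul_sub_eq_add_graphLaplacian (A : ι → ι → ℝ) (Q : ι → ℝ) (M : ℝ) (i : ι) :
    ∑ j, A i j * (M - Q j) = (∑ j, A i j) * (M - Q i) + graphLaplacian A Q i := by
  simp only [graphLaplacian, Finset.sum_mul, ← Finset.sum_add_distrib]
  exact Finset.sum_congr rfl fun j _ => by ring

variable {A : ι → ι → ℝ}

theorem mul_sub_le_of_graphLaplacian_le (hA : ∀ i j, 0 ≤ A i j) {Q K : ι → ℝ} {M : ℝ}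
    (hM : ∀ j, Q j ≤ M) {i : ι} (hQ : graphLaplacian A Q i ≤ K i) (j : ι) :
    A i j * (M - Q j) ≤ (∑ r, A i r) * (M - Q i) + K i := by
  have := Finset.single_le_sum (f := fun r => A i r * (M - Q r))
    (fun r _ => mul_nonneg (hA i r) (sub_nonneg.2 (hM r))) (Finset.mem_univ j)
  rw [sum_mul_sub_eq_add_graphLaplacian] at this
  linarith

theorem exists_sub_le_of_reflTransGen (hA : ∀ i j, 0 ≤ A i j) (K : ι → ℝ) {i j : ι}
    (hij : Relation.ReflTransGen (fun a b => 0 < A a b) i j) :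
    ∃ c, ∀ Q : ι → ℝ, (∀ l, graphLaplacian A Q l ≤ K l) →
      ∀ M, (∀ l, Q l ≤ M) → Q i = M → M - Q j ≤ c := by
  induction hij with
  | refl => exact ⟨0, fun Q _ M _ hi => by rw [hi, sub_self]⟩
  | @tail l l' _ hll' ih =>
    obtain ⟨c, hc⟩ := ih
    have hd : 0 ≤ ∑ r, A l r := Finset.sum_nonneg fun r _ => hA l r
    refine ⟨((∑ r, A l r) * c + K l) / A l l', fun Q hQ M hM hi => ?_⟩
    rw [le_div_iff₀' hll']
    calc A l l' * (M - Q l') ≤ (∑ r, A l r) * (M - Q l) + K l :=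
          mul_sub_le_of_graphLaplacian_le hA hM (hQ l) l'
      _ ≤ (∑ r, A l r) * c + K l := by gcongr; exact hc Q hQ M hM hi

theorem exists_forall_le_of_graphLaplacian_add_mul_le (hA : ∀ i j, 0 ≤ A i j) {B : ι → ℝ}
    (hB : ∀ i, 0 ≤ B i) {k : ι} (hBk : 0 < B k)
    (hreach : ∀ i, Relation.ReflTransGen (fun a b => 0 < A a b) i k) (K : ι → ℝ) :
    ∃ C, ∀ Q : ι → ℝ, (∀ i, 0 ≤ Q i) → (∀ i, graphLaplacian A Q i + B i * Q i ≤ K i) →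
      ∀ i, Q i ≤ C := by
  -- Walking from a maximiser of `Q` to `k` keeps the deficit `max Q - Q` bounded, and at `k`
  -- the term `B k * Q k` then bounds `Q k` itself.
  choose c hc using fun i => exists_sub_le_of_reflTransGen hA K (hreach i)
  obtain ⟨c', hc'⟩ := Finite.exists_le c
  have hd : 0 ≤ ∑ r, A k r := Finset.sum_nonneg fun r _ => hA k r
  refine ⟨((∑ r, A k r) * c' + K k) / B k + c', fun Q hQ0 hQ i => ?_⟩
  have hL : ∀ l, graphLaplacian A Q l ≤ K l := fun l => by nlinarith [hQ l, hB l, hQ0 l]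
  obtain ⟨i₀, -, hi₀⟩ := Finset.exists_max_image Finset.univ Q ⟨k, Finset.mem_univ k⟩
  have hM : ∀ l, Q l ≤ Q i₀ := fun l => hi₀ l (Finset.mem_univ l)
  have hMk : Q i₀ - Q k ≤ c' := (hc i₀ Q hL _ hM rfl).trans (hc' i₀)
  have hk : B k * Q k ≤ (∑ r, A k r) * c' + K k := by
    have h0 : 0 ≤ ∑ r, A k r * (Q i₀ - Q r) :=
      Finset.sum_nonneg fun r _ => mul_nonneg (hA k r) (sub_nonneg.2 (hM r))
    rw [sum_mul_sub_eq_add_graphLaplacian] at h0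
    nlinarith [hQ k, mul_le_mul_of_nonneg_left hMk hd]
  linarith [hM i, (le_div_iff₀' hBk).2 hk]

end GraphLaplacian

section Coupling

variable {F : Type*} [NormedAddCommGroup F] [InnerProductSpace ℝ F] {ι : Type*}

theorem inner_sum_smul_sub_s14 (s : Finset ι) (a : ι → ℝ) (e : ι → F) (e₀ : F) :
    ⟪e₀, ∑ j ∈ s, a j • (e j - e₀)⟫ =
      (∑ j ∈ s, a j * (‖e j‖ ^ 2 - ‖e₀‖ ^ 2)) / 2 - (∑ j ∈ s, a j * ‖e j - e₀‖ ^ 2) / 2 := by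
  simp only [inner_sum, real_inner_smul_right, Finset.sum_div, ← Finset.sum_sub_distrib]
  refine Finset.sum_congr rfl fun j _ => ?_
  rw [norm_sub_sq_real, inner_sub_right, real_inner_self_eq_norm_sq, real_inner_comm]
  ring

theorem norm_sum_smul_sq_le_s14 (s : Finset ι) {a : ι → ℝ} (ha : ∀ j ∈ s, 0 ≤ a j) (z : ι → F) :
    ‖∑ j ∈ s, a j • z j‖ ^ 2 ≤ (∑ j ∈ s, a j) * ∑ j ∈ s, a j * ‖z j‖ ^ 2 := by
  have h : ‖∑ j ∈ s, a j • z j‖ ≤ ∑ j ∈ s, a j * ‖z j‖ :=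
    (norm_sum_le _ _).trans_eq <| Finset.sum_congr rfl fun j hj => by
      rw [norm_smul, Real.norm_of_nonneg (ha j hj)]
  calc ‖∑ j ∈ s, a j • z j‖ ^ 2 ≤ (∑ j ∈ s, a j * ‖z j‖) ^ 2 := by gcongr
    _ ≤ _ := Finset.sum_sq_le_sum_mul_sum_of_sq_le_mul s ha
      (fun j hj => mul_nonneg (ha j hj) (sq_nonneg _)) fun j _ => le_of_eq (by ring)

variable [Fintype ι]

theorem inner_add_mul_norm_sq_le_of_coupling {A : ι → ι → ℝ} {i : ι} (hA : ∀ j, 0 ≤ A i j)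
    {b α : ℝ} (hα : 0 ≤ α) (hαb : 2 * α * b < 1)
    (hdeg : (∑ j, A i j) * (α / (1 - 2 * α * b)) < 1 / 2)
    {e : ι → F} {v : F} (hv : v + b • e i = ∑ j, A i j • (e j - e i)) :
    ⟪e i, v⟫ + α * ‖v‖ ^ 2 ≤
      -((1 - 2 * α * b) / 2 * graphLaplacian A (fun j => ‖e j‖ ^ 2) i) -
        b * (1 - α * b) * ‖e i‖ ^ 2 := by
  set w := ∑ j, A i j • (e j - e i)
  set S := ∑ j, A i j * ‖e j - e i‖ ^ 2
  have hS : 0 ≤ S := Finset.sum_nonneg fun j _ => mul_nonneg (hA j) (sq_nonneg _)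
  have hw : ‖w‖ ^ 2 ≤ (∑ j, A i j) * S := norm_sum_smul_sq_le_s14 _ (fun j _ => hA j) _
  have hαd : α * ∑ j, A i j ≤ (1 - 2 * α * b) / 2 := by
    rw [mul_div_assoc', div_lt_iff₀ (by linarith)] at hdeg
    linarith
  have hew : ⟪e i, w⟫ = -graphLaplacian A (fun j => ‖e j‖ ^ 2) i / 2 - S / 2 := by
    rw [inner_sum_smul_sub_s14, graphLaplacian, ← Finset.sum_neg_distrib]
    simp only [← mul_neg, neg_sub]
    rfl
  obtain rfl : v = w - b • e i := eq_sub_of_add_eq hv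
  simp only [norm_sub_sq_real, inner_sub_right, real_inner_smul_right, real_inner_self_eq_norm_sq,
    real_inner_comm (e i), hew, norm_smul, Real.norm_eq_abs, mul_pow, sq_abs]
  nlinarith [mul_le_mul_of_nonneg_left hw hα, mul_le_mul_of_nonneg_right hαd hS]

end Coupling

section Barbalat

variable {E : Type*} [NormedAddCommGroup E] {g : ℝ → E} {K : ℝ≥0}

theorem LipschitzOnWith.intervalIntegrable_norm_sq (hg : LipschitzOnWith K g (Ici 0)) {a b : ℝ}
    (ha : 0 ≤ a) (hb : 0 ≤ b) : IntervalIntegrable (fun t => ‖g t‖ ^ 2) volume a b :=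
  ((hg.continuousOn.norm.pow 2).mono fun _ ht => (le_min ha hb).trans ht.1).intervalIntegrable

theorem LipschitzOnWith.integral_norm_sq_add_mul_sq_le (hg : LipschitzOnWith K g (Ici 0))
    {T s δ : ℝ} (hT : 0 ≤ T) (hTs : T ≤ s) (hδ : 0 ≤ δ) (hKδ : K * δ ≤ ‖g s‖) :
    (∫ t in (0 : ℝ)..T, ‖g t‖ ^ 2) + δ * (‖g s‖ - K * δ) ^ 2 ≤
      ∫ t in (0 : ℝ)..s + δ, ‖g t‖ ^ 2 := by
  have hs : 0 ≤ s := hT.trans hTs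
  have hlow : ∀ t ∈ Icc s (s + δ), (‖g s‖ - K * δ) ^ 2 ≤ ‖g t‖ ^ 2 := by
    intro t ht
    have hgt := hg.norm_sub_le (mem_Ici.2 (hs.trans ht.1)) (mem_Ici.2 hs)
    rw [Real.norm_of_nonneg (sub_nonneg.2 ht.1)] at hgt
    have hKt : (K : ℝ) * (t - s) ≤ K * δ := by gcongr; linarith [ht.2]
    have := norm_sub_norm_le (g s) (g t)
    rw [norm_sub_rev] at this
    exact pow_le_pow_left₀ (sub_nonneg.2 hKδ) (by linarith) 2
  have h0T := hg.intervalIntegrable_norm_sq le_rfl hT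
  have hTs' := hg.intervalIntegrable_norm_sq hT hs
  have hsδ := hg.intervalIntegrable_norm_sq hs (by linarith : 0 ≤ s + δ)
  have hbump : δ * (‖g s‖ - K * δ) ^ 2 ≤ ∫ t in s..s + δ, ‖g t‖ ^ 2 :=
    calc δ * (‖g s‖ - K * δ) ^ 2 = ∫ _ in s..s + δ, (‖g s‖ - K * δ) ^ 2 := by simp
      _ ≤ ∫ t in s..s + δ, ‖g t‖ ^ 2 :=
        intervalIntegral.integral_mono_on (by linarith) intervalIntegrable_const hsδ hlow
  have hmid : 0 ≤ ∫ t in T..s, ‖g t‖ ^ 2 :=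
    intervalIntegral.integral_nonneg hTs fun t _ => sq_nonneg _
  rw [← intervalIntegral.integral_add_adjacent_intervals (h0T.trans hTs') hsδ,
    ← intervalIntegral.integral_add_adjacent_intervals h0T hTs']
  linarith

theorem LipschitzOnWith.tendsto_zero_of_integral_norm_sq_le (hg : LipschitzOnWith K g (Ici 0))
    {C : ℝ} (hC : ∀ T, 0 ≤ T → ∫ t in (0 : ℝ)..T, ‖g t‖ ^ 2 ≤ C) : Tendsto g atTop (𝓝 0) := by
  rw [Metric.tendsto_atTop]
  by_contra! hfreq
  obtain ⟨ε, hε, hfreq⟩ := hfreq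
  set δ := ε / (2 * (K + 1))
  have hδ : 0 < δ := by positivity
  have hKδ : K * δ ≤ ε / 2 :=
    calc (K : ℝ) * δ ≤ (K + 1) * δ := by gcongr; linarith
      _ = ε / 2 := by simp only [δ]; field_simp
  have hstep : ∀ T, 0 ≤ T → ∃ T', 0 ≤ T' ∧
      (∫ t in (0 : ℝ)..T, ‖g t‖ ^ 2) + δ * (ε / 2) ^ 2 ≤ ∫ t in (0 : ℝ)..T', ‖g t‖ ^ 2 := by
    intro T hT
    obtain ⟨s, hsT, hs⟩ := hfreq T
    rw [dist_zero_right] at hs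
    have hc : δ * (ε / 2) ^ 2 ≤ δ * (‖g s‖ - K * δ) ^ 2 := by
      gcongr
      linarith
    exact ⟨s + δ, by linarith, (add_le_add le_rfl hc).trans
      (hg.integral_norm_sq_add_mul_sq_le hT hsT hδ.le (by linarith))⟩
  have hgrow : ∀ n : ℕ, ∃ T, 0 ≤ T ∧ n * (δ * (ε / 2) ^ 2) ≤ ∫ t in (0 : ℝ)..T, ‖g t‖ ^ 2 := by
    intro n
    induction n with
    | zero => exact ⟨0, le_rfl, by simp⟩
    | succ n ih =>
      obtain ⟨T, hT, hn⟩ := ih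
      obtain ⟨T', hT', hT'c⟩ := hstep T hT
      exact ⟨T', hT', by push_cast; linarith⟩
  obtain ⟨n, hn⟩ := exists_nat_gt (C / (δ * (ε / 2) ^ 2))
  obtain ⟨T, hT, hnT⟩ := hgrow n
  rw [div_lt_iff₀ (by positivity)] at hn
  linarith [hC T hT]

end Barbalat

section Network

variable {ι F : Type*} [NormedAddCommGroup F]

noncomputable def signalEnergy (e : ι → ℝ → F) (T : ℝ) (i : ι) : ℝ := ∫ t in (0 : ℝ)..T, ‖e i t‖ ^ 2

theorem signalEnergy_nonneg (e : ι → ℝ → F) {T : ℝ} (hT : 0 ≤ T) (i : ι) :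
    0 ≤ signalEnergy e T i :=
  intervalIntegral.integral_nonneg hT fun _ _ => sq_nonneg _

variable [Fintype ι]

theorem integral_graphLaplacian_norm_sq (A : ι → ι → ℝ) {e : ι → ℝ → F} (he : ∀ j, Continuous (e j))
    (T : ℝ) (i : ι) :
    ∫ t in (0 : ℝ)..T, graphLaplacian A (fun j => ‖e j t‖ ^ 2) i =
      graphLaplacian A (signalEnergy e T) i := by
  have hint : ∀ j, IntervalIntegrable (fun t => ‖e j t‖ ^ 2) volume 0 T :=
    fun j => ((he j).norm.pow 2).intervalIntegrable _ _
  simp only [graphLaplacian, signalEnergy]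
  rw [intervalIntegral.integral_finsetSum fun j _ => ((hint i).sub (hint j)).const_mul _]
  simp only [intervalIntegral.integral_const_mul, intervalIntegral.integral_sub (hint i) (hint _)]

variable [InnerProductSpace ℝ F]

theorem integral_inner_add_mul_norm_sq_le_of_coupling {A : ι → ι → ℝ} {i : ι}
    (hA : ∀ j, 0 ≤ A i j) {b α : ℝ} (hα : 0 ≤ α) (hαb : 2 * α * b < 1)
    (hdeg : (∑ j, A i j) * (α / (1 - 2 * α * b)) < 1 / 2)
    {e : ι → ℝ → F} (he : ∀ j, Continuous (e j)) {v : ℝ → F} (hv : Continuous v)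
    (hcoup : ∀ t, 0 ≤ t → v t + b • e i t = ∑ j, A i j • (e j t - e i t)) {T : ℝ} (hT : 0 ≤ T) :
    ∫ t in (0 : ℝ)..T, (⟪e i t, v t⟫ + α * ‖v t‖ ^ 2) ≤
      -((1 - 2 * α * b) / 2 * graphLaplacian A (signalEnergy e T) i) -
        b * (1 - α * b) * signalEnergy e T i := by
  have hq : ∀ j, Continuous fun t => ‖e j t‖ ^ 2 := fun j => (he j).norm.pow 2
  have hL : Continuous fun t => graphLaplacian A (fun j => ‖e j t‖ ^ 2) i :=
    continuous_finsetSum _ fun j _ => continuous_const.mul ((hq i).sub (hq j))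
  have hL' : IntervalIntegrable (fun t => -((1 - 2 * α * b) / 2 *
      graphLaplacian A (fun j => ‖e j t‖ ^ 2) i)) volume 0 T :=
    (hL.const_mul _).neg.intervalIntegrable _ _
  have hq' : IntervalIntegrable (fun t => b * (1 - α * b) * ‖e i t‖ ^ 2) volume 0 T :=
    ((hq i).const_mul _).intervalIntegrable _ _
  calc ∫ t in (0 : ℝ)..T, (⟪e i t, v t⟫ + α * ‖v t‖ ^ 2)
      ≤ ∫ t in (0 : ℝ)..T, (-((1 - 2 * α * b) / 2 * graphLaplacian A (fun j => ‖e j t‖ ^ 2) i) -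
          b * (1 - α * b) * ‖e i t‖ ^ 2) :=
        intervalIntegral.integral_mono_on hT
          ((((he i).inner hv).add (continuous_const.mul (hv.norm.pow 2))).intervalIntegrable _ _)
          (hL'.sub hq') fun t ht =>
            inner_add_mul_norm_sq_le_of_coupling (e := fun j => e j t) hA hα hαb hdeg (hcoup t ht.1)
    _ = _ := by
      rw [intervalIntegral.integral_sub hL' hq', intervalIntegral.integral_neg,
        intervalIntegral.integral_const_mul, intervalIntegral.integral_const_mul,
        integral_graphLaplacian_norm_sq A he]
      rfl

theorem exists_bound_signalEnergy_and_storage {A : ι → ι → ℝ} (hA : ∀ i j, 0 ≤ A i j) {k : ι}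
    (hreach : ∀ i, Relation.ReflTransGen (fun a b => 0 < A a b) i k) {b α : ι → ℝ}
    (hb : ∀ i, 0 ≤ b i) (hbk : 0 < b k) (hα : ∀ i, 0 ≤ α i) (hαb : ∀ i, 2 * α i * b i < 1)
    (hdeg : ∀ i, (∑ j, A i j) * (α i / (1 - 2 * α i * b i)) < 1 / 2)
    {e v : ι → ℝ → F} (he : ∀ i, Continuous (e i)) (hv : ∀ i, Continuous (v i))
    (hcoup : ∀ i t, 0 ≤ t → v i t + b i • e i t = ∑ j, A i j • (e j t - e i t))
    {W : ι → ℝ → ℝ} (hW : ∀ i t, 0 ≤ W i t)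
    (hdiss : ∀ i T, 0 ≤ T →
      W i T - W i 0 ≤ ∫ t in (0 : ℝ)..T, (⟪e i t, v i t⟫ + α i * ‖v i t‖ ^ 2)) :
    ∃ C, ∀ i T, 0 ≤ T → signalEnergy e T i ≤ C ∧ W i T ≤ C := by
  have hγ : ∀ i, 0 < 1 - 2 * α i * b i := fun i => by linarith [hαb i]
  have hβ : ∀ i, 0 < 1 - α i * b i := fun i => by linarith [hαb i]
  have hstorage : ∀ i T, 0 ≤ T → W i T - W i 0 ≤
      -((1 - 2 * α i * b i) / 2 * graphLaplacian A (signalEnergy e T) i) -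
        b i * (1 - α i * b i) * signalEnergy e T i := fun i T hT =>
    (hdiss i T hT).trans <| integral_inner_add_mul_norm_sq_le_of_coupling (hA i) (hα i) (hαb i)
      (hdeg i) he (hv i) (hcoup i) hT
  obtain ⟨CE, hCE⟩ := exists_forall_le_of_graphLaplacian_add_mul_le hA
    (B := fun i => 2 * (b i * (1 - α i * b i)) / (1 - 2 * α i * b i))
    (fun i => div_nonneg (by nlinarith [hb i, hβ i]) (hγ i).le)
    (div_pos (by nlinarith [hβ k]) (hγ k)) hreach fun i => 2 * W i 0 / (1 - 2 * α i * b i)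
  have hE : ∀ i T, 0 ≤ T → signalEnergy e T i ≤ CE := fun i T hT =>
    hCE _ (fun j => signalEnergy_nonneg e hT j) (fun j => by
      rw [div_mul_eq_mul_div, add_div' _ _ _ (hγ j).ne', div_le_div_iff_of_pos_right (hγ j)]
      nlinarith [hstorage j T hT, hW j T]) i
  have hW_le : ∀ i T, 0 ≤ T →
      W i T ≤ W i 0 + (1 - 2 * α i * b i) / 2 * ((∑ j, A i j) * CE) := by
    intro i T hT
    have hsum : 0 ≤ ∑ j, A i j * (CE - signalEnergy e T j) :=
      Finset.sum_nonneg fun j _ => mul_nonneg (hA i j) (sub_nonneg.2 (hE j T hT))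
    rw [sum_mul_sub_eq_add_graphLaplacian] at hsum
    have hd : 0 ≤ ∑ j, A i j := Finset.sum_nonneg fun j _ => hA i j
    nlinarith [hstorage i T hT, hγ i, mul_nonneg (hb i) (hβ i).le,
      signalEnergy_nonneg e hT i, mul_nonneg hd (signalEnergy_nonneg e hT i)]
  obtain ⟨CW, hCW⟩ :=
    Finite.exists_le fun i => W i 0 + (1 - 2 * α i * b i) / 2 * ((∑ j, A i j) * CE)
  exact ⟨max CE CW, fun i T hT =>
    ⟨le_max_of_le_left (hE i T hT), le_max_of_le_right ((hW_le i T hT).trans (hCW i))⟩⟩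

end Network

theorem exists_norm_le_of_apply_le {E : Type*} [Norm E] {V : E → ℝ}
    (hV : ∀ c : ℝ, ∃ r : ℝ, ∀ x, r ≤ ‖x‖ → c ≤ V x) (c : ℝ) : ∃ r, ∀ x, V x ≤ c → ‖x‖ ≤ r := by
  obtain ⟨r, hr⟩ := hV (c + 1)
  exact ⟨r, fun x hx => le_of_not_ge fun h => by linarith [hr x h]⟩

theorem exists_norm_le_of_coupling {ι E : Type*} [Fintype ι] [NormedAddCommGroup E]
    [NormedSpace ℝ E] {A : ι → ι → ℝ} {b : ℝ} {e : ι → ℝ → E} {v : ℝ → E} {i : ι}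
    (hcoup : ∀ t, 0 ≤ t → v t + b • e i t = ∑ j, A i j • (e j t - e i t))
    (he : ∀ j, ∃ C, ∀ t, 0 ≤ t → ‖e j t‖ ≤ C) : ∃ C, ∀ t, 0 ≤ t → ‖v t‖ ≤ C := by
  choose C hC using he
  refine ⟨∑ j, |A i j| * (C j + C i) + |b| * C i, fun t ht => ?_⟩
  rw [eq_sub_of_add_eq (hcoup t ht)]
  refine (norm_sub_le _ _).trans <| add_le_add
    ((norm_sum_le _ _).trans <| Finset.sum_le_sum fun j _ => ?_) ?_ <;>
    rw [norm_smul, Real.norm_eq_abs] <;> gcongr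
  · exact (norm_sub_le _ _).trans (add_le_add (hC j t ht) (hC i t ht))
  · exact hC i t ht

theorem lipschitzOnWith_sub_of_hasDerivAt {E U : Type*} [NormedAddCommGroup E] [NormedSpace ℝ E]
    [NormedAddCommGroup U] {f : E × U → E} {Kf : ℝ≥0} (hf : LipschitzWith Kf f)
    {x x' : ℝ → E} {u u' : ℝ → U} (hx : ∀ t, 0 ≤ t → HasDerivAt x (f (x t, u t)) t)
    (hx' : ∀ t, 0 ≤ t → HasDerivAt x' (f (x' t, u' t)) t) {Cx Cu : ℝ}
    (hxC : ∀ t, 0 ≤ t → ‖x t - x' t‖ ≤ Cx) (huC : ∀ t, 0 ≤ t → ‖u t - u' t‖ ≤ Cu) :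
    LipschitzOnWith (Kf * max Cx Cu).toNNReal (fun t => x t - x' t) (Ici 0) := by
  refine (convex_Ici 0).lipschitzOnWith_of_nnnorm_hasDerivWithin_le
    (fun t ht => ((hx t ht).sub (hx' t ht)).hasDerivWithinAt) fun t ht => ?_
  rw [← norm_toNNReal, ← dist_eq_norm]
  refine Real.toNNReal_le_toNNReal <| (hf.dist_le_mul _ _).trans ?_
  rw [Prod.dist_eq, dist_eq_norm, dist_eq_norm]
  gcongr
  exacts [hxC t ht, huC t ht]

theorem leader_following_output_synchronization_general
    (N m : ℕ) (n : Fin N → ℕ) (A : Fin N → Fin N → ℝ)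
    (hA_nonneg : ∀ i j, 0 ≤ A i j)
    (hconn : ∀ i j : Fin N, i ≠ j → Relation.TransGen (fun a b => 0 < A a b) i j)
    (b : Fin N → ℝ)
    (hb_nonneg : ∀ i, 0 ≤ b i)
    (hb_pos : ∃ k, 0 < b k)
    (α : Fin N → ℝ)
    (hα_nonneg : ∀ i, 0 ≤ α i)
    (hαb : ∀ i, 2 * α i * b i < 1)
    (hα_deg : ∀ i, (∑ j, A i j) * (α i / (1 - 2 * α i * b i)) < 1 / 2)
    (f : ∀ i : Fin N,
      EuclideanSpace ℝ (Fin (n i)) × EuclideanSpace ℝ (Fin m) →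
        EuclideanSpace ℝ (Fin (n i)))
    (hf_smooth : ∀ i, ContDiff ℝ 1 (f i))
    (hf_bdd : ∀ i, ∃ C : ℝ, ∀ z, ‖fderiv ℝ (f i) z‖ ≤ C)
    (h : ∀ i : Fin N,
      EuclideanSpace ℝ (Fin (n i)) →ₗ[ℝ] EuclideanSpace ℝ (Fin m))
    (V : ∀ i : Fin N, EuclideanSpace ℝ (Fin (n i)) → ℝ)
    (hV_nonneg : ∀ i x, 0 ≤ V i x)
    (hV_radial : ∀ i, ∀ c : ℝ, ∃ r : ℝ, ∀ x, r ≤ ‖x‖ → c ≤ V i x)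
    (x xbar : ∀ i : Fin N, ℝ → EuclideanSpace ℝ (Fin (n i)))
    (u ubar : Fin N → ℝ → EuclideanSpace ℝ (Fin m))
    (y : Fin N → ℝ → EuclideanSpace ℝ (Fin m))
    (ybar : ℝ → EuclideanSpace ℝ (Fin m))
    (hy : ∀ i t, y i t = h i (x i t))
    (hybar : ∀ i t, h i (xbar i t) = ybar t)
    (hode : ∀ i t, 0 ≤ t → HasDerivAt (x i) (f i (x i t, u i t)) t)
    (hode_bar : ∀ i t, 0 ≤ t → HasDerivAt (xbar i) (f i (xbar i t, ubar i t)) t)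
    (hx_cont : ∀ i, Continuous (x i))
    (hxbar_cont : ∀ i, Continuous (xbar i))
    (hu_cont : ∀ i, Continuous (u i))
    (hubar_cont : ∀ i, Continuous (ubar i))
    (hcoupling : ∀ i t, 0 ≤ t →
      (u i t - ubar i t) + b i • (y i t - ybar t) =
        ∑ j, A i j • ((y j t - ybar t) - (y i t - ybar t)))
    (hdiss : ∀ i, ∀ T, 0 ≤ T →
      V i (x i T - xbar i T) - V i (x i 0 - xbar i 0) ≤
        ∫ t in (0 : ℝ)..T,
          (⟪y i t - ybar t, u i t - ubar i t⟫
            + α i * ‖u i t - ubar i t‖ ^ 2)) :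
    (∀ i, ∃ C : ℝ, ∀ t, 0 ≤ t → ‖x i t - xbar i t‖ ≤ C) ∧
    (∀ i, Filter.Tendsto (fun t => ‖y i t - ybar t‖) Filter.atTop (nhds 0)) := by
  obtain ⟨k, hbk⟩ := hb_pos
  let H := fun i => LinearMap.toContinuousLinearMap (h i)
  have he : ∀ i, (fun t => y i t - ybar t) = H i ∘ fun t => x i t - xbar i t := fun i =>
    funext fun t => by simp [H, hy, hybar]
  obtain ⟨C, hC⟩ := exists_bound_signalEnergy_and_storage (e := fun i t => y i t - ybar t)
    (v := fun i t => u i t - ubar i t) (W := fun i t => V i (x i t - xbar i t)) hA_nonneg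
    (fun i => (eq_or_ne i k).elim (· ▸ .refl) fun hik => (hconn i k hik).to_reflTransGen)
    hb_nonneg hbk hα_nonneg hαb hα_deg
    (fun i => he i ▸ (H i).continuous.comp ((hx_cont i).sub (hxbar_cont i)))
    (fun i => (hu_cont i).sub (hubar_cont i)) hcoupling (fun i t => hV_nonneg i _) hdiss
  have hx_bdd : ∀ i, ∃ C, ∀ t, 0 ≤ t → ‖x i t - xbar i t‖ ≤ C := fun i =>
    (exists_norm_le_of_apply_le (hV_radial i) C).imp fun r hr t ht => hr _ (hC i t ht).2
  refine ⟨hx_bdd, fun i => ?_⟩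
  have hy_bdd : ∀ j, ∃ C, ∀ t, 0 ≤ t → ‖y j t - ybar t‖ ≤ C := fun j => by
    obtain ⟨Cx, hCx⟩ := hx_bdd j
    exact ⟨‖H j‖ * Cx, fun t ht => congrFun (he j) t ▸ (H j).le_opNorm_of_le (hCx t ht)⟩
  obtain ⟨Cx, hCx⟩ := hx_bdd i
  obtain ⟨Cu, hCu⟩ := exists_norm_le_of_coupling (hcoupling i) hy_bdd
  obtain ⟨Cf, hCf⟩ := hf_bdd i
  have hf_lip := lipschitzWith_of_nnnorm_fderiv_le ((hf_smooth i).differentiable one_ne_zero)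
    fun z => norm_toNNReal (a := fderiv ℝ (f i) z) ▸ Real.toNNReal_le_toNNReal (hCf z)
  have hy_lip := (H i).lipschitz.comp_lipschitzOnWith
    (lipschitzOnWith_sub_of_hasDerivAt hf_lip (hode i) (hode_bar i) hCx hCu)
  rw [← he i] at hy_lip
  simpa using (hy_lip.tendsto_zero_of_integral_norm_sq_le fun T hT => (hC i T hT).1).norm

/-- Theorem 1⁺, statement (2): leader-following synchronization. Under strong
connectivity, `b_i ≥ 0` not all zero, `2α_i b_i < 1`,
`d_i⁺[A]·α_i/(1-2α_i b_i) < 1/2`, with `f_i` C¹ with globally bounded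
derivative, `h_i` linear, `V_i` radially unbounded storage functions, and the
incremental dissipation inequality along a reference solution with common
output `ȳ`, the deviations `x_i - x̄_i` are bounded on `[0,∞)` and
`‖y_i(t) - ȳ(t)‖ → 0` as `t → ∞`. -/
theorem leader_following_output_synchronization
    (N m : ℕ) (n : Fin N → ℕ) (A : Fin N → Fin N → ℝ)
    (hA_nonneg : ∀ i j, 0 ≤ A i j)
    (hA_diag : ∀ i, A i i = 0)
    (hconn : ∀ i j : Fin N, i ≠ j → Relation.TransGen (fun a b => 0 < A a b) i j)
    (b : Fin N → ℝ)
    (hb_nonneg : ∀ i, 0 ≤ b i)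
    (hb_pos : ∃ k, 0 < b k)
    (α : Fin N → ℝ)
    (hα_nonneg : ∀ i, 0 ≤ α i)
    (hαb : ∀ i, 2 * α i * b i < 1)
    (hα_deg : ∀ i, (∑ j, A i j) * (α i / (1 - 2 * α i * b i)) < 1 / 2)
    (f : ∀ i : Fin N,
      EuclideanSpace ℝ (Fin (n i)) × EuclideanSpace ℝ (Fin m) →
        EuclideanSpace ℝ (Fin (n i)))
    (hf_smooth : ∀ i, ContDiff ℝ 1 (f i))
    (hf_bdd : ∀ i, ∃ C : ℝ, ∀ z, ‖fderiv ℝ (f i) z‖ ≤ C)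
    (h : ∀ i : Fin N,
      EuclideanSpace ℝ (Fin (n i)) →ₗ[ℝ] EuclideanSpace ℝ (Fin m))
    (V : ∀ i : Fin N, EuclideanSpace ℝ (Fin (n i)) → ℝ)
    (hV_cont : ∀ i, Continuous (V i))
    (hV_nonneg : ∀ i x, 0 ≤ V i x)
    (hV_radial : ∀ i, ∀ c : ℝ, ∃ r : ℝ, ∀ x, r ≤ ‖x‖ → c ≤ V i x)
    (x xbar : ∀ i : Fin N, ℝ → EuclideanSpace ℝ (Fin (n i)))
    (u ubar : Fin N → ℝ → EuclideanSpace ℝ (Fin m))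
    (y : Fin N → ℝ → EuclideanSpace ℝ (Fin m))
    (ybar : ℝ → EuclideanSpace ℝ (Fin m))
    (hy : ∀ i t, y i t = h i (x i t))
    (hybar : ∀ i t, h i (xbar i t) = ybar t)
    (hode : ∀ i t, 0 ≤ t → HasDerivAt (x i) (f i (x i t, u i t)) t)
    (hode_bar : ∀ i t, 0 ≤ t → HasDerivAt (xbar i) (f i (xbar i t, ubar i t)) t)
    (hx_cont : ∀ i, Continuous (x i))
    (hxbar_cont : ∀ i, Continuous (xbar i))
    (hu_cont : ∀ i, Continuous (u i))
    (hubar_cont : ∀ i, Continuous (ubar i))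
    (hcoupling : ∀ i t, 0 ≤ t →
      (u i t - ubar i t) + b i • (y i t - ybar t) =
        ∑ j, A i j • ((y j t - ybar t) - (y i t - ybar t)))
    (hdiss : ∀ i, ∀ T, 0 ≤ T →
      V i (x i T - xbar i T) - V i (x i 0 - xbar i 0) ≤
        ∫ t in (0 : ℝ)..T,
          (⟪y i t - ybar t, u i t - ubar i t⟫
            + α i * ‖u i t - ubar i t‖ ^ 2)) :
    (∀ i, ∃ C : ℝ, ∀ t, 0 ≤ t → ‖x i t - xbar i t‖ ≤ C) ∧
    (∀ i, Filter.Tendsto (fun t => ‖y i t - ybar t‖) Filter.atTop (nhds 0)) :=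
  leader_following_output_synchronization_general N m n A hA_nonneg hconn b hb_nonneg hb_pos α
    hα_nonneg hαb hα_deg f hf_smooth hf_bdd h V hV_nonneg hV_radial x xbar u ubar y ybar hy hybar
    hode hode_bar hx_cont hxbar_cont hu_cont hubar_cont hcoupling hdiss
end
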